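/- Let $\eta_j = \frac{\alpha_j}{\mu(j+E)}$ with $\alpha_j \ge 4$, $\mu > 0$, $E \ge 1$. Then for all integers $1 \le i \le t$, $\prod_{j=i}^{t}\left(1 - \frac{\mu \eta_j}{2}\right) \le \frac{(i+E)^2}{(t+E-1)^2}$, provided each factor $1 - \frac{\mu\eta_j}{2}$ is nonnegative. -/

import Mathlib

/-!
With `k = j + E`, each factor is `1 - α_j / (2k) ≤ (k - 2) / k`, and the product of the
`(k - 2) / k` telescopes (write it as `g (k - 1) / g k` with `g k = (k - 1) k`) to
`(a - 2)(a - 1) / ((b - 1) b)` for `a = i + E`, `b = t + E`. This is at most `a² / (b - 1)²`.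
-/

open Finset

lemma one_sub_mul_div_div_two_le {μ x α : ℝ} (hμ : μ ≠ 0) (hx : 0 < x) (hα : 4 ≤ α) :
    1 - μ * (α / (μ * x)) / 2 ≤ (x - 2) / x := by
  have hcancel : μ * (α / (μ * x)) / 2 = α / (2 * x) := by field_simp
  have hfour : 4 / (2 * x) ≤ α / (2 * x) := by gcongr
  have hsplit : (x - 2) / x = 1 - 4 / (2 * x) := by field_simp; ring
  rw [hcancel, hsplit]
  linarith

lemma prod_Icc_sub_two_div {c : ℝ} {i : ℕ} (hi : 1 < (i : ℝ) + c) {t : ℕ} (hit : i ≤ t) :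
    ∏ j ∈ Icc i t, (((j : ℝ) + c - 2) / ((j : ℝ) + c)) =
      ((i : ℝ) + c - 2) * ((i : ℝ) + c - 1) / (((t : ℝ) + c - 1) * ((t : ℝ) + c)) := by
  induction t, hit using Nat.le_induction with
  | base =>
    rw [Icc_self, prod_singleton]
    have : (i : ℝ) + c - 1 ≠ 0 := by linarith
    field_simp
  | succ t hit ih =>
    have ht : (i : ℝ) ≤ t := by exact_mod_cast hit
    have hden : ((t : ℝ) + c - 1) * ((t : ℝ) + c) * (((t + 1 : ℕ) : ℝ) + c) ≠ 0 := by
      push_cast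
      exact mul_ne_zero (mul_ne_zero (by linarith) (by linarith)) (by linarith)
    have hden' : (((t + 1 : ℕ) : ℝ) + c - 1) * (((t + 1 : ℕ) : ℝ) + c) ≠ 0 := by
      push_cast
      exact mul_ne_zero (by linarith) (by linarith)
    rw [prod_Icc_succ_top (by omega), ih, div_mul_div_comm, div_eq_div_iff hden hden']
    push_cast
    ring

lemma sub_two_mul_sub_one_div_le {a b : ℝ} (ha : 2 ≤ a) (hab : a ≤ b) :
    (a - 2) * (a - 1) / ((b - 1) * b) ≤ a ^ 2 / (b - 1) ^ 2 := by
  have hnum : (a - 2) * (a - 1) ≤ a ^ 2 := by nlinarith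
  have hden : (b - 1) ^ 2 ≤ (b - 1) * b := by nlinarith
  exact div_le_div₀ (sq_nonneg a) hnum (pow_pos (by linarith) 2) hden

theorem stmt_5 (μ : ℝ) (hμ : 0 < μ) (E : ℕ) (hE : 1 ≤ E)
    (α η : ℕ → ℝ) (hα : ∀ j, 4 ≤ α j)
    (hη : ∀ j, η j = α j / (μ * ((j : ℝ) + E)))
    (i t : ℕ) (hi : 1 ≤ i) (hit : i ≤ t)
    (hnonneg : ∀ j ∈ Finset.Icc i t, 0 ≤ 1 - μ * η j / 2) :
    ∏ j ∈ Finset.Icc i t, (1 - μ * η j / 2) ≤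
      ((i : ℝ) + E) ^ 2 / ((t : ℝ) + E - 1) ^ 2 := by
  have hiE : 2 ≤ (i : ℝ) + E := by
    have : (1 : ℝ) ≤ i := by exact_mod_cast hi
    have : (1 : ℝ) ≤ E := by exact_mod_cast hE
    linarith
  have hit' : (i : ℝ) + E ≤ t + E := by gcongr
  calc ∏ j ∈ Icc i t, (1 - μ * η j / 2)
      ≤ ∏ j ∈ Icc i t, (((j : ℝ) + E - 2) / ((j : ℝ) + E)) := by
        refine prod_le_prod hnonneg fun j _ => ?_
        rw [hη]
        exact one_sub_mul_div_div_two_le hμ.ne' (by positivity) (hα j)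
    _ = ((i : ℝ) + E - 2) * ((i : ℝ) + E - 1) / (((t : ℝ) + E - 1) * ((t : ℝ) + E)) :=
        prod_Icc_sub_two_div (by linarith) hit
    _ ≤ ((i : ℝ) + E) ^ 2 / ((t : ℝ) + E - 1) ^ 2 := sub_two_mul_sub_one_div_le hiE hit'
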